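/- For odd n ≥ 3, Player 2 has a winning strategy for REL(Dic_n, {a,b,c}) with the presentation Dic_n = ⟨a,b,c | a^n = b^2 = c^2 = abc⟩. -/

import Mathlib

/-!
Player 2 answers `a^{±1}` with the same letter and swaps `b ↔ c`, `b⁻¹ ↔ c⁻¹`. Every round
`m · φ(m)` is then `a^{±2}` or `a^{n±1}`, an even power of `a` since `n` is odd, so after each
round the walk lies in the subgroup `H` of even powers of `a`. No letter lies in `H`, and the
six letters fill three right cosets of `H` in pairs `{m, φ(m)⁻¹}`. Hence a legal move of
Player 1 could only revisit a vertex if the current position had been visited before, or by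
undoing Player 2's last reply. The group is finite, so the play stops, and then either
Player 2 has closed a cycle or Player 1 has no legal move.
-/

namespace RelatorGames

variable {G : Type*} [Group G]

/-- The letters available in the relator games: elements of `S` and their inverses. -/
def letters (S : Set G) : Set G := S ∪ (fun g => g⁻¹) '' S

/-- Evaluate a history of moves (most recent letter first) to a group element:
the group element represented by the word built so far. -/
def eval (h : List G) : G := h.reverse.prod

/-- A move `m` is legal after history `h`: it is a letter of `S ∪ S⁻¹` and it is not
the inverse of the immediately preceding letter (no backtracking). -/
def LegalMove (S : Set G) (h : List G) (m : G) : Prop :=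
  m ∈ letters S ∧ ∀ p ∈ h.head?, m ≠ p⁻¹

/-- Appending `m` to the history `h` produces a word equal in `G` to some earlier
prefix of the word (equivalently, the walk in the Cayley graph revisits a vertex). -/
def ClosesCycle (h : List G) (m : G) : Prop :=
  ∃ t, t <:+ h ∧ eval t = eval (m :: h)

/-- A strategy: a choice of next letter given the history (most recent letter first). -/
abbrev Strategy (G : Type*) := List G → G

/-- The sequence of histories arising when the first player (moving at even steps)
uses `σ` and the second player (moving at odd steps) uses `τ`. -/
def hist (σ τ : Strategy G) : ℕ → List G
  | 0 => []
  | k + 1 =>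
      (if k % 2 = 0 then σ (hist σ τ k) else τ (hist σ τ k)) :: hist σ τ k

/-- The move made at step `k` in the play of `σ` against `τ`. -/
def moveAt (σ τ : Strategy G) (k : ℕ) : G :=
  if k % 2 = 0 then σ (hist σ τ k) else τ (hist σ τ k)

/-- Step `j` is uneventful: the move made is legal and does not close a cycle. -/
def Ok (S : Set G) (σ τ : Strategy G) (j : ℕ) : Prop :=
  LegalMove S (hist σ τ j) (moveAt σ τ j) ∧ ¬ ClosesCycle (hist σ τ j) (moveAt σ τ j)

/-- In the play of `σ` against `τ`, the player moving at steps congruent to `p` mod 2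
wins the relator achievement game `REL(G,S)`: at the first eventful step, either it is
that player's turn and they legally close a cycle, or it is the opponent's turn and the
opponent has made an illegal move (in particular, has no legal move). -/
def RelWins (S : Set G) (p : ℕ) (σ τ : Strategy G) : Prop :=
  ∃ k : ℕ, (∀ j < k, Ok S σ τ j) ∧
    ((k % 2 = p ∧ LegalMove S (hist σ τ k) (moveAt σ τ k) ∧
        ClosesCycle (hist σ τ k) (moveAt σ τ k)) ∨
      (k % 2 ≠ p ∧ ¬ LegalMove S (hist σ τ k) (moveAt σ τ k)))

/-- In the play of `σ` against `τ`, the player moving at steps congruent to `p` mod 2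
wins the relator avoidance game `RAV(G,S)`: at the first eventful step it is the
opponent's turn, and the opponent either makes an illegal move (in particular, has no
legal move) or closes a cycle. -/
def RavWins (S : Set G) (p : ℕ) (σ τ : Strategy G) : Prop :=
  ∃ k : ℕ, (∀ j < k, Ok S σ τ j) ∧ k % 2 ≠ p ∧
    (¬ LegalMove S (hist σ τ k) (moveAt σ τ k) ∨ ClosesCycle (hist σ τ k) (moveAt σ τ k))

/-- Player 1 has a winning strategy for `REL(G,S)`. -/
def FirstWinsREL (S : Set G) : Prop :=
  ∃ σ : Strategy G, ∀ τ : Strategy G, RelWins S 0 σ τ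

/-- Player 2 has a winning strategy for `REL(G,S)`. -/
def SecondWinsREL (S : Set G) : Prop :=
  ∃ τ : Strategy G, ∀ σ : Strategy G, RelWins S 1 σ τ

/-- Player 1 has a winning strategy for `RAV(G,S)`. -/
def FirstWinsRAV (S : Set G) : Prop :=
  ∃ σ : Strategy G, ∀ τ : Strategy G, RavWins S 0 σ τ

/-- Player 2 has a winning strategy for `RAV(G,S)`. -/
def SecondWinsRAV (S : Set G) : Prop :=
  ∃ τ : Strategy G, ∀ σ : Strategy G, RavWins S 1 σ τ

end RelatorGames

namespace RelatorGames

variable {G : Type*}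

section History

variable {σ τ : Strategy G}

theorem hist_succ (σ τ : Strategy G) (k : ℕ) : hist σ τ (k + 1) = moveAt σ τ k :: hist σ τ k :=
  rfl

theorem hist_suffix_hist {i j : ℕ} (hij : i ≤ j) : hist σ τ i <:+ hist σ τ j := by
  induction j, hij using Nat.le_induction with
  | base => exact List.suffix_rfl
  | succ j _ ih => exact ih.trans (List.suffix_cons _ _)

theorem exists_eq_hist_of_suffix {t : List G} {k : ℕ} (h : t <:+ hist σ τ k) :
    ∃ j ≤ k, t = hist σ τ j := by
  induction k with
  | zero => exact ⟨0, le_rfl, List.suffix_nil.mp h⟩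
  | succ k ih =>
    rcases List.suffix_cons_iff.mp h with h | h
    · exact ⟨k + 1, le_rfl, h⟩
    · obtain ⟨j, hj, rfl⟩ := ih h
      exact ⟨j, by omega, rfl⟩

end History

variable [Group G]

theorem eval_cons (m : G) (h : List G) : eval (m :: h) = eval h * m := by
  simp [eval]

section Play

variable {S : Set G} {σ τ : Strategy G}

theorem eval_hist_ne {k i j : ℕ} (hok : ∀ j < k, Ok S σ τ j) (hij : i < j) (hjk : j ≤ k) :
    eval (hist σ τ i) ≠ eval (hist σ τ j) := by
  obtain ⟨j, rfl⟩ : ∃ j', j = j' + 1 := ⟨j - 1, by omega⟩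
  exact fun he => (hok j (by omega)).2 ⟨hist σ τ i, hist_suffix_hist (by omega), he⟩

theorem exists_not_ok [Finite G] (S : Set G) (σ τ : Strategy G) : ∃ k, ¬ Ok S σ τ k := by
  by_contra! hok
  obtain ⟨i, j, hne, hij⟩ := Finite.exists_ne_map_eq_of_infinite fun k => eval (hist σ τ k)
  rcases hne.lt_or_gt with hlt | hgt
  · exact eval_hist_ne (fun j _ => hok j) hlt le_rfl hij
  · exact eval_hist_ne (fun j _ => hok j) hgt le_rfl hij.symm

theorem relWins_one [Finite G]
    (legal_reply : ∀ s, Ok S σ τ (2 * s) →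
      LegalMove S (hist σ τ (2 * s + 1)) (moveAt σ τ (2 * s + 1)))
    (no_cycle : ∀ t, (∀ j < 2 * t, Ok S σ τ j) →
      ∀ m, LegalMove S (hist σ τ (2 * t)) m → ¬ ClosesCycle (hist σ τ (2 * t)) m) :
    RelWins S 1 σ τ := by
  classical
  have hex := exists_not_ok S σ τ
  have hmin : ∀ j < Nat.find hex, Ok S σ τ j := fun j hj => not_not.mp (Nat.find_min hex hj)
  have hstop := Nat.find_spec hex
  refine ⟨Nat.find hex, hmin, ?_⟩
  rcases Nat.even_or_odd' (Nat.find hex) with ⟨t, ht | ht⟩ <;> rw [ht] at hmin hstop ⊢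
  · refine Or.inr ⟨by omega, fun hlegal => hstop ⟨hlegal, no_cycle t hmin _ hlegal⟩⟩
  · have hlegal := legal_reply t (hmin _ (by omega))
    exact Or.inl ⟨by omega, hlegal, not_not.mp fun hcyc => hstop ⟨hlegal, hcyc⟩⟩

end Play

def mirror (φ : G → G) : Strategy G
  | [] => 1 -- never used: Player 2 always moves after a letter
  | g :: _ => φ g

theorem moveAt_mirror_odd (φ : G → G) (σ : Strategy G) (s : ℕ) :
    moveAt σ (mirror φ) (2 * s + 1) = φ (moveAt σ (mirror φ) (2 * s)) := by
  rw [moveAt, if_neg (by omega)]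
  rfl

/-- `φ` is Player 2's reply to each letter; `H` contains every position reached after a full
round. -/
structure IsMirrorPairing (S : Set G) (H : Subgroup G) (φ : G → G) : Prop where
  map_mem : ∀ m ∈ letters S, φ m ∈ letters S
  map_ne_inv : ∀ m ∈ letters S, φ m ≠ m⁻¹
  mul_map_mem : ∀ m ∈ letters S, m * φ m ∈ H
  not_mem : ∀ m ∈ letters S, m ∉ H
  eq_or_eq_inv_of_mul_inv_mem :
    ∀ m ∈ letters S, ∀ m' ∈ letters S, m' * m⁻¹ ∈ H → m = m' ∨ m = (φ m')⁻¹

namespace IsMirrorPairing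

variable {S : Set G} {H : Subgroup G} {φ : G → G} {σ : Strategy G}

theorem eval_hist_mem (hφ : IsMirrorPairing S H φ) {t : ℕ}
    (hok : ∀ j < 2 * t, Ok S σ (mirror φ) j) : eval (hist σ (mirror φ) (2 * t)) ∈ H := by
  induction t with
  | zero => exact H.one_mem
  | succ t ih =>
    rw [Nat.mul_succ, hist_succ, hist_succ, moveAt_mirror_odd, eval_cons, eval_cons, mul_assoc]
    exact H.mul_mem (ih fun j hj => hok j (by omega))
      (hφ.mul_map_mem _ (hok (2 * t) (by omega)).1.1)

/-- Player 1 moving from `g ∈ H` can only return to a position `g' ∈ H` (impossible, as no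
letter lies in `H`) or to a position `g' m'` reached by their own earlier move `m'`; then
`m = m'` repeats `g = g'`, and `m = (φ m')⁻¹` either repeats the position after Player 2's
reply `φ m'` or undoes that reply. -/
theorem not_closesCycle (hφ : IsMirrorPairing S H φ) {t : ℕ}
    (hok : ∀ j < 2 * t, Ok S σ (mirror φ) j) {m : G}
    (hm : LegalMove S (hist σ (mirror φ) (2 * t)) m) :
    ¬ ClosesCycle (hist σ (mirror φ) (2 * t)) m := by
  rintro ⟨_, hsuf, hcyc⟩
  obtain ⟨j, hj, rfl⟩ := exists_eq_hist_of_suffix hsuf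
  set g := eval (hist σ (mirror φ) (2 * t))
  have hg : g ∈ H := hφ.eval_hist_mem hok
  rw [eval_cons] at hcyc
  obtain ⟨s, rfl | rfl⟩ := Nat.even_or_odd' j
  · have hg' := hφ.eval_hist_mem (t := s) fun i hi => hok i (by omega)
    refine hφ.not_mem m hm.1 ?_
    rw [← inv_mul_cancel_left g m, ← hcyc]
    exact H.mul_mem (H.inv_mem hg) hg'
  · set g' := eval (hist σ (mirror φ) (2 * s))
    set m' := moveAt σ (mirror φ) (2 * s)
    have hg' : g' ∈ H := hφ.eval_hist_mem fun i hi => hok i (by omega)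
    have hm' : m' ∈ letters S := (hok (2 * s) (by omega)).1.1
    have hcyc' : g' * m' = g * m := by rwa [hist_succ, eval_cons] at hcyc
    have hcoset : m' * m⁻¹ ∈ H := by
      rw [show m' * m⁻¹ = g'⁻¹ * g by
        rw [mul_inv_eq_iff_eq_mul, mul_assoc, ← hcyc', inv_mul_cancel_left]]
      exact H.mul_mem (H.inv_mem hg') hg
    rcases hφ.eq_or_eq_inv_of_mul_inv_mem m hm.1 m' hm' hcoset with rfl | rfl
    · exact eval_hist_ne hok (show 2 * s < 2 * t by omega) le_rfl (mul_right_cancel hcyc')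
    · have hround : eval (hist σ (mirror φ) (2 * s + 2)) = g := by
        rw [hist_succ, hist_succ, moveAt_mirror_odd, eval_cons, eval_cons, hcyc', mul_assoc,
          inv_mul_cancel, mul_one]
      rcases (show 2 * s + 2 ≤ 2 * t by omega).lt_or_eq with hlt | heq
      · exact eval_hist_ne hok hlt le_rfl hround
      · refine hm.2 (φ m') ?_ rfl
        rw [← heq, hist_succ, moveAt_mirror_odd]
        rfl

theorem secondWinsREL [Finite G] (hφ : IsMirrorPairing S H φ) : SecondWinsREL S := by
  refine ⟨mirror φ, fun σ => relWins_one (fun s hok => ?_) fun t hok m hm =>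
    hφ.not_closesCycle hok hm⟩
  have hm := hok.1.1
  rw [moveAt_mirror_odd]
  refine ⟨hφ.map_mem _ hm, fun p hp => ?_⟩
  rw [hist_succ, List.head?_cons, Option.mem_some_iff] at hp
  exact hp ▸ hφ.map_ne_inv _ hm

end IsMirrorPairing

end RelatorGames

namespace QuaternionGroup

open RelatorGames

variable {n : ℕ}

theorem inv_a (i : ZMod (2 * n)) : (a i : QuaternionGroup n)⁻¹ = a (-i) := rfl

theorem inv_xa (i : ZMod (2 * n)) :
    (xa i : QuaternionGroup n)⁻¹ = xa ((n : ZMod (2 * n)) + i) :=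
  rfl

theorem natCast_add_self : (n : ZMod (2 * n)) + n = 0 := by
  rw [← Nat.cast_add, ← two_mul, ZMod.natCast_self]

theorem two_ne_zero_of_ne_one (hn : n ≠ 1) : (2 : ZMod (2 * n)) ≠ 0 := by
  intro h
  have h2 : 2 * n ∣ 2 * 1 := (ZMod.natCast_eq_zero_iff 2 (2 * n)).mp (by exact_mod_cast h)
  exact hn (Nat.dvd_one.mp (Nat.dvd_of_mul_dvd_mul_left two_pos h2))

def parity : ZMod (2 * n) →+* ZMod 2 := ZMod.castHom (dvd_mul_right 2 n) (ZMod 2)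

theorem parity_natCast (hodd : Odd n) : parity (n : ZMod (2 * n)) = 1 := by
  rw [map_natCast, ZMod.natCast_eq_one_iff_odd]
  exact hodd

variable (n) in
def evenRotations : Subgroup (QuaternionGroup n) where
  carrier := {g | ∃ e, a e = g ∧ parity e = 0}
  mul_mem' := by
    rintro _ _ ⟨e, rfl, he⟩ ⟨f, rfl, hf⟩
    exact ⟨e + f, a_mul_a e f, by rw [map_add, he, hf, add_zero]⟩
  one_mem' := ⟨0, a_zero, map_zero _⟩
  inv_mem' := by
    rintro _ ⟨e, rfl, he⟩
    exact ⟨-e, rfl, by rw [map_neg, he, neg_zero]⟩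

@[simp]
theorem a_mem_evenRotations {e : ZMod (2 * n)} : a e ∈ evenRotations n ↔ parity e = 0 :=
  ⟨fun ⟨_, he, h⟩ => a.inj he ▸ h, fun h => ⟨e, rfl, h⟩⟩

@[simp]
theorem xa_notMem_evenRotations {i : ZMod (2 * n)} : xa i ∉ evenRotations n :=
  fun ⟨_, he, _⟩ => nomatch he

/-- Player 2's reply: `a^{±1}` is repeated, while `b = xa n ↔ c = xa (n - 1)` and
`b⁻¹ = xa 0 ↔ c⁻¹ = xa (-1)` are swapped. -/
def swapBC : QuaternionGroup n → QuaternionGroup n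
  | a i => a i
  | xa i => xa (-1 - i)

theorem mul_swapBC_mem (hodd : Odd n) (g : QuaternionGroup n) :
    g * swapBC g ∈ evenRotations n := by
  cases g with
  | a i =>
    simp only [swapBC, a_mul_a, a_mem_evenRotations, map_add]
    exact (by decide : ∀ p : ZMod 2, p + p = 0) _
  | xa i =>
    simp only [swapBC, xa_mul_xa, a_mem_evenRotations, map_add, map_sub, map_neg, map_one,
      parity_natCast hodd]
    exact (by decide : ∀ p : ZMod 2, 1 + (-1 - p) - p = 0) _

variable (n) in
/-- With `b = (xa 0)⁻¹ = xa n` and `c = a 1 * b = xa (n - 1)` these generate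
`⟨a, b, c | aⁿ = b² = c² = abc⟩`. -/
def triangleGenerators : Set (QuaternionGroup n) := {a 1, (xa 0)⁻¹, a 1 * (xa 0)⁻¹}

theorem mem_letters_iff {g : QuaternionGroup n} :
    g ∈ letters (triangleGenerators n) ↔
      g = a 1 ∨ g = xa n ∨ g = xa (n - 1) ∨ g = a (-1) ∨ g = xa 0 ∨ g = xa (-1) := by
  have hc : (n : ZMod (2 * n)) + (n - 1) = -1 := by linear_combination natCast_add_self
  simp only [letters, triangleGenerators, Set.image_insert_eq, Set.image_singleton, Set.mem_union,
    Set.mem_insert_iff, Set.mem_singleton_iff, inv_a, inv_xa, a_mul_xa, add_zero, hc,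
    natCast_add_self, or_assoc]

variable {m m' : QuaternionGroup n}

theorem swapBC_mem_letters (hm : m ∈ letters (triangleGenerators n)) :
    swapBC m ∈ letters (triangleGenerators n) := by
  have := natCast_add_self (n := n)
  rw [mem_letters_iff] at hm ⊢
  rcases hm with rfl | rfl | rfl | rfl | rfl | rfl <;> simp only [swapBC] <;> grind

theorem swapBC_ne_inv (hn : n ≠ 1) (hm : m ∈ letters (triangleGenerators n)) :
    swapBC m ≠ m⁻¹ := by
  have := natCast_add_self (n := n)
  have := two_ne_zero_of_ne_one hn
  rw [mem_letters_iff] at hm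
  rcases hm with rfl | rfl | rfl | rfl | rfl | rfl <;> simp only [swapBC, inv_a, inv_xa] <;> grind

theorem notMem_evenRotations_of_mem_letters (hm : m ∈ letters (triangleGenerators n)) :
    m ∉ evenRotations n := by
  rw [mem_letters_iff] at hm
  rcases hm with rfl | rfl | rfl | rfl | rfl | rfl <;> simp [parity]

/-- The six letters lie in three right cosets of `evenRotations n`, in the pairs `{a, a⁻¹}`,
`{b, c⁻¹}`, `{c, b⁻¹}`, each of the form `{m, (swapBC m)⁻¹}`. -/
theorem eq_or_eq_swapBC_inv_of_mul_inv_mem (hodd : Odd n)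
    (hm : m ∈ letters (triangleGenerators n)) (hm' : m' ∈ letters (triangleGenerators n))
    (hcoset : m' * m⁻¹ ∈ evenRotations n) : m = m' ∨ m = (swapBC m')⁻¹ := by
  have := natCast_add_self (n := n)
  rw [mem_letters_iff] at hm hm'
  rcases hm with rfl | rfl | rfl | rfl | rfl | rfl <;>
    rcases hm' with rfl | rfl | rfl | rfl | rfl | rfl <;>
    simp [swapBC, inv_a, inv_xa, map_add, map_sub, parity_natCast hodd] at hcoset ⊢ <;> grind

theorem isMirrorPairing_swapBC (hodd : Odd n) (hn : n ≠ 1) :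
    IsMirrorPairing (triangleGenerators n) (evenRotations n) swapBC :=
  ⟨fun _ => swapBC_mem_letters, fun _ => swapBC_ne_inv hn, fun m _ => mul_swapBC_mem hodd m,
    fun _ => notMem_evenRotations_of_mem_letters,
    fun _ hm _ hm' => eq_or_eq_swapBC_inv_of_mul_inv_mem hodd hm hm'⟩

end QuaternionGroup

open RelatorGames in
/-- For odd `n ≥ 3`, Player 2 has a winning strategy for
`REL(Dic_n, {a,b,c})` with the triangle presentation (`b = x⁻¹`, `c = a x⁻¹`). -/
theorem rel_dicyclic_odd_three_generators_second_wins (n : ℕ) (hn : 3 ≤ n)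
    (hodd : Odd n) :
    SecondWinsREL
      ({QuaternionGroup.a 1, (QuaternionGroup.xa 0)⁻¹,
          QuaternionGroup.a 1 * (QuaternionGroup.xa 0)⁻¹} : Set (QuaternionGroup n)) := by
  have : NeZero n := ⟨by omega⟩
  exact (QuaternionGroup.isMirrorPairing_swapBC hodd (by omega)).secondWinsREL
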